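/- Let α > 0. If f(r) = ∫₀^∞ M_{u,α}(r) μ(du) for a positive measure μ with 0 < ∫₀^∞ u^{-α} μ(du) < ∞ (where M_{u,α}(r) = ∫₀¹ e^{-zur} z^{α-1} dz), then lim_{r→∞} r^α f(r) = Γ(α) · ∫₀^∞ u^{-α} μ(du); in particular f(r) ~ C/r^α as r → ∞ for a positive constant C. -/

import Mathlib

open MeasureTheory Filter Set Real Topology

/-! The substitution `t = z u r` gives `r^α M_{u,α}(r) = u^{-α} γ(α, u r)`, where `γ` is the lower
incomplete gamma function. Hence `r^α M_{u,α}(r)` increases to `Γ(α) u^{-α}` as `r → ∞` and is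
dominated by that limit, which is `μ`-integrable; dominated convergence finishes the proof. -/

noncomputable def lowerIncompleteGamma (α x : ℝ) : ℝ :=
  ∫ t in (0 : ℝ)..x, exp (-t) * t ^ (α - 1)

noncomputable def kernelM (α u r : ℝ) : ℝ :=
  ∫ z in Ioc (0 : ℝ) 1, exp (-z * u * r) * z ^ (α - 1)

section lowerIncompleteGamma

variable {α x : ℝ}

lemma lowerIncompleteGamma_nonneg (α : ℝ) (hx : 0 ≤ x) : 0 ≤ lowerIncompleteGamma α x :=
  intervalIntegral.integral_nonneg hx fun _ ht =>
    mul_nonneg (exp_nonneg _) (rpow_nonneg ht.1 _)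

lemma lowerIncompleteGamma_le_Gamma (hα : 0 < α) (hx : 0 ≤ x) :
    lowerIncompleteGamma α x ≤ Gamma α := by
  rw [lowerIncompleteGamma, intervalIntegral.integral_of_le hx, Gamma_eq_integral hα]
  refine setIntegral_mono_set (GammaIntegral_convergent hα) ?_ Ioc_subset_Ioi_self.eventuallyLE
  filter_upwards [ae_restrict_mem measurableSet_Ioi] with t ht
  exact mul_nonneg (exp_nonneg _) (rpow_nonneg (le_of_lt ht) _)

lemma tendsto_lowerIncompleteGamma_atTop (hα : 0 < α) :
    Tendsto (lowerIncompleteGamma α) atTop (𝓝 (Gamma α)) := by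
  rw [Gamma_eq_integral hα]
  exact intervalIntegral_tendsto_integral_Ioi 0 (GammaIntegral_convergent hα) tendsto_id

end lowerIncompleteGamma

section kernelM

variable {α u r : ℝ}

lemma setIntegral_exp_neg_mul_mul_rpow {c : ℝ} (α : ℝ) (hc : 0 < c) :
    ∫ z in Ioc (0 : ℝ) 1, exp (-z * c) * z ^ (α - 1) = c ^ (-α) * lowerIncompleteGamma α c := by
  have hsubst : ∀ z ∈ uIcc (0 : ℝ) 1, exp (-z * c) * z ^ (α - 1) =
      c ^ (1 - α) * (exp (-(c * z)) * (c * z) ^ (α - 1)) := by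
    intro z hz
    have hz0 : 0 ≤ z := by simpa using hz.1
    have hcancel : c ^ (1 - α) * c ^ (α - 1) = 1 := by rw [← rpow_add hc]; norm_num
    rw [mul_rpow hc.le hz0, show -(c * z) = -z * c by ring]
    linear_combination -(exp (-z * c) * z ^ (α - 1)) * hcancel
  rw [← intervalIntegral.integral_of_le zero_le_one, intervalIntegral.integral_congr hsubst,
    intervalIntegral.integral_const_mul,
    intervalIntegral.integral_comp_mul_left (fun t => exp (-t) * t ^ (α - 1)) hc.ne',
    mul_zero, mul_one, smul_eq_mul, ← mul_assoc, ← rpow_neg_one, ← rpow_add hc, lowerIncompleteGamma]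
  ring_nf

lemma rpow_mul_kernelM (hu : 0 < u) (hr : 0 < r) :
    r ^ α * kernelM α u r = u ^ (-α) * lowerIncompleteGamma α (u * r) := by
  simp_rw [kernelM, mul_assoc _ u r]
  rw [setIntegral_exp_neg_mul_mul_rpow α (mul_pos hu hr), ← mul_assoc, mul_rpow hu.le hr.le,
    rpow_neg hu.le, rpow_neg hr.le]
  field_simp

lemma tendsto_rpow_mul_kernelM (hα : 0 < α) (hu : 0 < u) :
    Tendsto (fun r => r ^ α * kernelM α u r) atTop (𝓝 (Gamma α * u ^ (-α))) := by
  rw [mul_comm]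
  refine (((tendsto_lowerIncompleteGamma_atTop hα).comp
    (tendsto_id.const_mul_atTop hu)).const_mul _).congr' ?_
  filter_upwards [eventually_gt_atTop 0] with r hr
  exact (rpow_mul_kernelM hu hr).symm

lemma norm_rpow_mul_kernelM_le (hα : 0 < α) (hu : 0 < u) (hr : 0 < r) :
    ‖r ^ α * kernelM α u r‖ ≤ Gamma α * u ^ (-α) := by
  have hγ := lowerIncompleteGamma_nonneg α (mul_pos hu hr).le
  rw [rpow_mul_kernelM hu hr, norm_of_nonneg (mul_nonneg (rpow_nonneg hu.le _) hγ), mul_comm]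
  exact mul_le_mul_of_nonneg_right (lowerIncompleteGamma_le_Gamma hα (mul_pos hu hr).le)
    (rpow_nonneg hu.le _)

lemma stronglyMeasurable_kernelM (α r : ℝ) : StronglyMeasurable fun u => kernelM α u r := by
  have : StronglyMeasurable fun p : ℝ × ℝ => exp (-p.2 * p.1 * r) * p.2 ^ (α - 1) :=
    (by fun_prop : Measurable _).stronglyMeasurable
  exact this.integral_prod_right'

end kernelM

/-- If `f(r) = ∫₀^∞ M_{u,α}(r) μ(du)` with `0 < ∫ u^{-α} μ(du) < ∞`, then
`lim_{r→∞} r^α f(r) = Γ(α)·∫ u^{-α} μ(du)`; in particular `f(r) ~ C/r^α` with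
`C > 0`. -/
theorem M_representation_asymptotic (α : ℝ) (hα : 0 < α)
    (μ : Measure ℝ) (hsupp : μ (Set.Iic 0) = 0)
    (hint : Integrable (fun u : ℝ => u ^ (-α)) μ)
    (hpos : 0 < ∫ u, u ^ (-α) ∂μ)
    (f : ℝ → ℝ)
    (hf : ∀ r : ℝ, 0 < r →
      f r = ∫ u, (∫ z in Set.Ioc (0 : ℝ) 1, Real.exp (-z * u * r) * z ^ (α - 1)) ∂μ) :
    Tendsto (fun r : ℝ => r ^ α * f r) atTop
      (nhds (Real.Gamma α * ∫ u, u ^ (-α) ∂μ)) ∧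
      0 < Real.Gamma α * ∫ u, u ^ (-α) ∂μ := by
  refine ⟨?_, mul_pos (Gamma_pos_of_pos hα) hpos⟩
  have hae : ∀ᵐ u ∂μ, 0 < u := by
    rw [ae_iff]
    simp only [not_lt]
    exact hsupp
  have hbound : ∀ᶠ r in atTop, ∀ᵐ u ∂μ, ‖r ^ α * kernelM α u r‖ ≤ Gamma α * u ^ (-α) := by
    filter_upwards [eventually_gt_atTop 0] with r hr
    filter_upwards [hae] with u hu
    exact norm_rpow_mul_kernelM_le hα hu hr
  have hlim : ∀ᵐ u ∂μ, Tendsto (fun r => r ^ α * kernelM α u r) atTop (𝓝 (Gamma α * u ^ (-α))) := by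
    filter_upwards [hae] with u hu
    exact tendsto_rpow_mul_kernelM hα hu
  have hdom := tendsto_integral_filter_of_dominated_convergence _
    (Eventually.of_forall fun r => ((stronglyMeasurable_kernelM α r).aestronglyMeasurable.const_mul _))
    hbound (hint.const_mul _) hlim
  rw [integral_const_mul] at hdom
  refine hdom.congr' ?_
  filter_upwards [eventually_gt_atTop 0] with r hr
  rw [hf r hr, integral_const_mul]
  rfl
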